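/- arXiv:1703.06443 — 4 statements merged into one kernel-verified Lean document; each statement's English description precedes it below -/
import Mathlib

section
/- Let K_R = diag(k₁,k₂,k₃) with positive entries, Ψ(R_e) = (1/2)·tr(K_R·(I − R_e)), and e_R = skew(K_R·R_e)^∨. Define c₁ = min{k₁+k₂, k₂+k₃, k₃+k₁}, c₂ = max{(k₁−k₂)², (k₂−k₃)², (k₃−k₁)²}, c₃ = max{k₁+k₂, k₂+k₃, k₃+k₁}. Then for any ψ with Ψ(R_e) ≤ ψ < c₁, the quadratic bounds (c₁/(c₂+c₃²))·‖e_R‖² ≤ Ψ(R_e) ≤ (c₃/(c₁(c₁−ψ)))·‖e_R‖² hold. -/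
open Matrix

noncomputable section

/-- The special orthogonal group SO(3) as a set of real 3×3 matrices. -/
def SO3 : Set (Matrix (Fin 3) (Fin 3) ℝ) := {R | Rᵀ * R = 1 ∧ R.det = 1}

/-- The hat map: hat(x)·y = x × y. -/
def hat (x : Fin 3 → ℝ) : Matrix (Fin 3) (Fin 3) ℝ :=
  !![0, -x 2, x 1; x 2, 0, -x 0; -x 1, x 0, 0]

/-- The vee map, inverse of hat on skew-symmetric matrices. -/
def vee (A : Matrix (Fin 3) (Fin 3) ℝ) : Fin 3 → ℝ := ![A 2 1, A 0 2, A 1 0]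

/-- Skew-symmetric part of a matrix. -/
def skew (A : Matrix (Fin 3) (Fin 3) ℝ) : Matrix (Fin 3) (Fin 3) ℝ := (1/2 : ℝ) • (A - Aᵀ)

/-- Euclidean norm on ℝ³. -/
def norm3 (x : Fin 3 → ℝ) : ℝ := Real.sqrt (∑ i, x i ^ 2)

/-- Error navigation function Ψ(R) = ½ tr(K (I − R)). -/
def Psi (K R : Matrix (Fin 3) (Fin 3) ℝ) : ℝ := (1/2) * (K * (1 - R)).trace


private lemma wsum (a0 a1 a2 b0 b1 b2 u0 u1 u2 : ℝ)
    (h0 : a0 ≤ b0) (h1 : a1 ≤ b1) (h2 : a2 ≤ b2)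
    (hu0 : 0 ≤ u0) (hu1 : 0 ≤ u1) (hu2 : 0 ≤ u2) :
    a0*u0 + a1*u1 + a2*u2 ≤ b0*u0 + b1*u1 + b2*u2 := by
  have t0 := mul_le_mul_of_nonneg_right h0 hu0
  have t1 := mul_le_mul_of_nonneg_right h1 hu1
  have t2 := mul_le_mul_of_nonneg_right h2 hu2
  linarith only [t0, t1, t2]

lemma aux_main (D0 D1 D2 C1 C2 C3 m0 m1 m2 P ψ N u0 u1 u2 cc : ℝ)
    (hC1pos : 0 < C1) (hC2 : 0 ≤ C2) (hC13 : C1 ≤ C3)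
    (hm0 : C1 ≤ m0) (hm1 : C1 ≤ m1) (hm2 : C1 ≤ m2)
    (hm0' : m0 ≤ C3) (hm1' : m1 ≤ C3) (hm2' : m2 ≤ C3)
    (hD0 : 0 ≤ D0) (hD1 : 0 ≤ D1) (hD2 : 0 ≤ D2)
    (hD0' : D0 ≤ C2) (hD1' : D1 ≤ C2) (hD2' : D2 ≤ C2)
    (hu0 : 0 ≤ u0) (hu1 : 0 ≤ u1) (hu2 : 0 ≤ u2)
    (hsum : u0 + u1 + u2 = 1 - cc) (hclb : -1 ≤ cc)
    (hP : P = (m0*u0 + m1*u1 + m2*u2)/2)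
    (hN : 4*N = D0*(u1*u2) + D1*(u0*u2) + D2*(u0*u1)
          + (1+cc)*(m0^2*u0 + m1^2*u1 + m2^2*u2))
    (hψ1 : P ≤ ψ) (hψ2 : ψ < C1) :
    C1/(C2+C3^2) * N ≤ P ∧ P ≤ C3/(C1*(C1-ψ)) * N := by
  have hm0n : 0 ≤ m0 := by linarith only [hC1pos, hm0]
  have hm1n : 0 ≤ m1 := by linarith only [hC1pos, hm1]
  have hm2n : 0 ≤ m2 := by linarith only [hC1pos, hm2]
  have hC3pos : 0 < C3 := lt_of_lt_of_le hC1pos hC13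
  have hcub : cc ≤ 1 := by linarith only [hsum, hu0, hu1, hu2]
  have hσn : 0 ≤ u0 + u1 + u2 := by linarith only [hu0, hu1, hu2]
  have hσ2 : u0 + u1 + u2 ≤ 2 := by linarith only [hsum, hclb]
  have hPnn : 0 ≤ P := by
    have h := wsum 0 0 0 m0 m1 m2 u0 u1 u2 hm0n hm1n hm2n hu0 hu1 hu2
    rw [hP]; linarith only [h]
  have hσP : C1*(u0+u1+u2) ≤ 2*P := by
    have h := wsum C1 C1 C1 m0 m1 m2 u0 u1 u2 hm0 hm1 hm2 hu0 hu1 hu2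
    rw [hP]; linarith only [h]
  have hMle : m0^2*u0 + m1^2*u1 + m2^2*u2 ≤ C3*(2*P) := by
    have h := wsum (m0*m0) (m1*m1) (m2*m2) (C3*m0) (C3*m1) (C3*m2) u0 u1 u2
      (mul_le_mul_of_nonneg_right hm0' hm0n) (mul_le_mul_of_nonneg_right hm1' hm1n)
      (mul_le_mul_of_nonneg_right hm2' hm2n) hu0 hu1 hu2
    rw [hP]; linarith only [h]
  have hMge : C1*(2*P) ≤ m0^2*u0 + m1^2*u1 + m2^2*u2 := by
    have h := wsum (C1*m0) (C1*m1) (C1*m2) (m0*m0) (m1*m1) (m2*m2) u0 u1 u2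
      (mul_le_mul_of_nonneg_right hm0 hm0n) (mul_le_mul_of_nonneg_right hm1 hm1n)
      (mul_le_mul_of_nonneg_right hm2 hm2n) hu0 hu1 hu2
    rw [hP]; linarith only [h]
  have hDnn : 0 ≤ D0*(u1*u2) + D1*(u0*u2) + D2*(u0*u1) := by
    have t0 := mul_nonneg hD0 (mul_nonneg hu1 hu2)
    have t1 := mul_nonneg hD1 (mul_nonneg hu0 hu2)
    have t2 := mul_nonneg hD2 (mul_nonneg hu0 hu1)
    linarith only [t0, t1, t2]
  have hDle : D0*(u1*u2) + D1*(u0*u2) + D2*(u0*u1) ≤ C2*(u1*u2+u0*u2+u0*u1) := by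
    have h := wsum D0 D1 D2 C2 C2 C2 (u1*u2) (u0*u2) (u0*u1) hD0' hD1' hD2'
      (mul_nonneg hu1 hu2) (mul_nonneg hu0 hu2) (mul_nonneg hu0 hu1)
    linarith only [h]
  have hsq : u1*u2+u0*u2+u0*u1 ≤ (u0+u1+u2)^2/3 := by
    have t0 := sq_nonneg (u0-u1)
    have t1 := sq_nonneg (u1-u2)
    have t2 := sq_nonneg (u0-u2)
    linarith only [t0, t1, t2]
  have key1 : C1*(u0+u1+u2)^2 ≤ 4*P := by
    have h1 := mul_nonneg (by linarith only [hσP] : (0:ℝ) ≤ 2*P - C1*(u0+u1+u2)) hσn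
    have h2 := mul_nonneg hPnn (by linarith only [hσ2] : (0:ℝ) ≤ 2 - (u0+u1+u2))
    linarith only [h1, h2]
  have hC3P : 0 ≤ C3*P := mul_nonneg hC3pos.le hPnn
  have hA : (1+cc)*(m0^2*u0+m1^2*u1+m2^2*u2) ≤ 4*(C3*P) := by
    have h1 := mul_nonneg (by linarith only [hclb] : (0:ℝ) ≤ 1+cc)
        (by linarith only [hMle] : (0:ℝ) ≤ C3*(2*P) - (m0^2*u0+m1^2*u1+m2^2*u2))
    have h2 := mul_nonneg hC3P (by linarith only [hcub] : (0:ℝ) ≤ 1 - cc)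
    linarith only [h1, h2]
  have hB1 := mul_le_mul_of_nonneg_left hDle hC1pos.le
  have hB2 := mul_le_mul_of_nonneg_left hsq (mul_nonneg hC1pos.le hC2)
  have hB3 := mul_le_mul_of_nonneg_left key1 hC2
  have hA1 := mul_le_mul_of_nonneg_left hA hC1pos.le
  have hC1C3P : C1*(4*(C3*P)) ≤ 4*(C3^2*P) := by
    have h := mul_nonneg (by linarith only [hC13] : (0:ℝ) ≤ C3 - C1) hC3P
    linarith only [h]
  have hNC1 : 4*(C1*N) = C1*(D0*(u1*u2) + D1*(u0*u2) + D2*(u0*u1))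
      + C1*((1+cc)*(m0^2*u0 + m1^2*u1 + m2^2*u2)) := by
    linear_combination C1 * hN
  have hC2P : 0 ≤ C2*P := mul_nonneg hC2 hPnn
  have hNup : C1*N ≤ (C2+C3^2)*P := by
    linarith only [hB1, hB2, hB3, hA1, hC1C3P, hNC1, hC2P]
  have hcP : C1*(1-cc) ≤ 2*P := by
    have h := hσP
    rw [hsum] at h
    linarith only [h]
  have h1c : 2*(C1-ψ) ≤ C1*(1+cc) := by linarith only [hcP, hψ1]
  have hNlo : (C1-ψ)*P ≤ N := by
    have h1 := mul_nonneg (by linarith only [hclb] : (0:ℝ) ≤ 1+cc)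
        (by linarith only [hMge] : (0:ℝ) ≤ (m0^2*u0+m1^2*u1+m2^2*u2) - C1*(2*P))
    have h2 := mul_nonneg hPnn (by linarith only [h1c] : (0:ℝ) ≤ C1*(1+cc) - 2*(C1-ψ))
    linarith only [h1, h2, hDnn, hN]
  have hNnn : 0 ≤ N := by
    have h := mul_nonneg (by linarith only [hψ2] : (0:ℝ) ≤ C1 - ψ) hPnn
    linarith only [h, hNlo]
  constructor
  · rw [div_mul_eq_mul_div, div_le_iff₀ (add_pos_of_nonneg_of_pos hC2 (pow_pos hC3pos 2))]
    linarith only [hNup]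
  · rw [div_mul_eq_mul_div, le_div_iff₀ (mul_pos hC1pos (by linarith only [hψ2] : (0:ℝ) < C1 - ψ))]
    have h2 := mul_le_mul_of_nonneg_left hNlo hC1pos.le
    have h3 := mul_nonneg (by linarith only [hC13] : (0:ℝ) ≤ C3 - C1) hNnn
    linarith only [h2, h3]

/-- Quadratic bounds on Ψ: h₁‖e_R‖² ≤ Ψ ≤ h₂‖e_R‖² on the sublevel set Ψ ≤ ψ < c₁. -/
theorem stmt_4 (k₁ k₂ k₃ : ℝ) (hk₁ : 0 < k₁) (hk₂ : 0 < k₂) (hk₃ : 0 < k₃)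
    (Re : Matrix (Fin 3) (Fin 3) ℝ) (hRe : Re ∈ SO3) (ψ : ℝ)
    (hΨ : Psi (Matrix.diagonal ![k₁, k₂, k₃]) Re ≤ ψ)
    (hψ : ψ < min (min (k₁ + k₂) (k₂ + k₃)) (k₃ + k₁)) :
    (min (min (k₁ + k₂) (k₂ + k₃)) (k₃ + k₁) /
        (max (max ((k₁ - k₂) ^ 2) ((k₂ - k₃) ^ 2)) ((k₃ - k₁) ^ 2) +
          (max (max (k₁ + k₂) (k₂ + k₃)) (k₃ + k₁)) ^ 2)) *
        norm3 (vee (skew (Matrix.diagonal ![k₁, k₂, k₃] * Re))) ^ 2 ≤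
      Psi (Matrix.diagonal ![k₁, k₂, k₃]) Re ∧
    Psi (Matrix.diagonal ![k₁, k₂, k₃]) Re ≤
      (max (max (k₁ + k₂) (k₂ + k₃)) (k₃ + k₁) /
        (min (min (k₁ + k₂) (k₂ + k₃)) (k₃ + k₁) *
          (min (min (k₁ + k₂) (k₂ + k₃)) (k₃ + k₁) - ψ))) *
        norm3 (vee (skew (Matrix.diagonal ![k₁, k₂, k₃] * Re))) ^ 2 := by
  obtain ⟨horth, hdet⟩ := hRe
  have hrow : Re * Reᵀ = 1 := mul_eq_one_comm.mp horth
  have hadj : Re.adjugate = Reᵀ := by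
    calc Re.adjugate = Re.adjugate * (Re * Reᵀ) := by rw [hrow, Matrix.mul_one]
    _ = (Re.adjugate * Re) * Reᵀ := by rw [Matrix.mul_assoc]
    _ = Reᵀ := by rw [Matrix.adjugate_mul, hdet, one_smul, Matrix.one_mul]
  have hc00 : Re 0 0 * Re 0 0 + Re 1 0 * Re 1 0 + Re 2 0 * Re 2 0 = 1 := by
    have h := congrFun (congrFun horth 0) 0
    simpa [Matrix.mul_apply, Fin.sum_univ_three] using h
  have hc11 : Re 0 1 * Re 0 1 + Re 1 1 * Re 1 1 + Re 2 1 * Re 2 1 = 1 := by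
    have h := congrFun (congrFun horth 1) 1
    simpa [Matrix.mul_apply, Fin.sum_univ_three] using h
  have hc22 : Re 0 2 * Re 0 2 + Re 1 2 * Re 1 2 + Re 2 2 * Re 2 2 = 1 := by
    have h := congrFun (congrFun horth 2) 2
    simpa [Matrix.mul_apply, Fin.sum_univ_three] using h
  have hr00 : Re 0 0 * Re 0 0 + Re 0 1 * Re 0 1 + Re 0 2 * Re 0 2 = 1 := by
    have h := congrFun (congrFun hrow 0) 0
    simpa [Matrix.mul_apply, Fin.sum_univ_three] using h
  have hr11 : Re 1 0 * Re 1 0 + Re 1 1 * Re 1 1 + Re 1 2 * Re 1 2 = 1 := by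
    have h := congrFun (congrFun hrow 1) 1
    simpa [Matrix.mul_apply, Fin.sum_univ_three] using h
  have hcof00 : Re 0 0 = Re 1 1 * Re 2 2 - Re 1 2 * Re 2 1 := by
    have h := congrFun (congrFun hadj 0) 0
    rw [Matrix.adjugate_fin_three] at h
    simp at h
    linarith [h]
  have hcof11 : Re 1 1 = Re 0 0 * Re 2 2 - Re 0 2 * Re 2 0 := by
    have h := congrFun (congrFun hadj 1) 1
    rw [Matrix.adjugate_fin_three] at h
    simp at h
    linarith [h]
  have hcof22 : Re 2 2 = Re 0 0 * Re 1 1 - Re 0 1 * Re 1 0 := by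
    have h := congrFun (congrFun hadj 2) 2
    rw [Matrix.adjugate_fin_three] at h
    simp at h
    linarith [h]
  -- quadratic identities
  have hA0 : ((Re 2 1 - Re 1 2)/2)^2 = (1+((Re 0 0 + Re 1 1 + Re 2 2 - 1)/2))*((Re 0 0 - Re 1 1 - Re 2 2 + 1)/2) := by
    linear_combination (1/4)*hc11 + (1/4)*hc22 - (1/4)*hr00 - (1/2)*hcof00
  have hA1 : ((Re 0 2 - Re 2 0)/2)^2 = (1+((Re 0 0 + Re 1 1 + Re 2 2 - 1)/2))*((Re 1 1 - Re 0 0 - Re 2 2 + 1)/2) := by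
    linear_combination (1/4)*hc00 + (1/4)*hc22 - (1/4)*hr11 - (1/2)*hcof11
  have hA2 : ((Re 1 0 - Re 0 1)/2)^2 = (1+((Re 0 0 + Re 1 1 + Re 2 2 - 1)/2))*((Re 2 2 - Re 0 0 - Re 1 1 + 1)/2) := by
    linear_combination (-1/4)*hc22 + (1/4)*hr00 + (1/4)*hr11 - (1/2)*hcof22
  have hI312 : ((Re 2 1 + Re 1 2)/2)^2 = ((Re 1 1 - Re 0 0 - Re 2 2 + 1)/2)*((Re 2 2 - Re 0 0 - Re 1 1 + 1)/2) := by
    linear_combination (1/4)*hc11 + (1/4)*hc22 - (1/4)*hr00 + (1/2)*hcof00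
  have hI302 : ((Re 0 2 + Re 2 0)/2)^2 = ((Re 0 0 - Re 1 1 - Re 2 2 + 1)/2)*((Re 2 2 - Re 0 0 - Re 1 1 + 1)/2) := by
    linear_combination (1/4)*hc00 + (1/4)*hc22 - (1/4)*hr11 + (1/2)*hcof11
  have hI301 : ((Re 1 0 + Re 0 1)/2)^2 = ((Re 0 0 - Re 1 1 - Re 2 2 + 1)/2)*((Re 1 1 - Re 0 0 - Re 2 2 + 1)/2) := by
    linear_combination (-1/4)*hc22 + (1/4)*hr00 + (1/4)*hr11 + (1/2)*hcof22
  have hF1 : ((Re 0 2 - Re 2 0)/2)*((Re 0 2 + Re 2 0)/2) = ((Re 2 1 - Re 1 2)/2)*((Re 2 1 + Re 1 2)/2) := by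
    linear_combination (-1/4)*hc00 - (1/4)*hc11 + (1/4)*hr00 + (1/4)*hr11
  have hF2 : ((Re 1 0 - Re 0 1)/2)*((Re 1 0 + Re 0 1)/2) = ((Re 2 1 - Re 1 2)/2)*((Re 2 1 + Re 1 2)/2) := by
    linear_combination (-1/4)*hc11 + (1/4)*hr11
  have hI10 : ((Re 0 0 - Re 1 1 - Re 2 2 + 1)/2)*(1 - Re 1 1) = ((Re 0 0 - Re 1 1 - Re 2 2 + 1)/2)^2 + ((Re 0 2 + Re 2 0)/2)^2 := by
    linear_combination (-1/4)*hc00 - (1/4)*hc22 + (1/4)*hr11 - (1/2)*hcof11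
  have hI11 : ((Re 1 1 - Re 0 0 - Re 2 2 + 1)/2)*(1 - Re 2 2) = ((Re 1 1 - Re 0 0 - Re 2 2 + 1)/2)^2 + ((Re 1 0 + Re 0 1)/2)^2 := by
    linear_combination (1/4)*hc22 - (1/4)*hr00 - (1/4)*hr11 - (1/2)*hcof22
  have hI12 : ((Re 2 2 - Re 0 0 - Re 1 1 + 1)/2)*(1 - Re 0 0) = ((Re 2 2 - Re 0 0 - Re 1 1 + 1)/2)^2 + ((Re 2 1 + Re 1 2)/2)^2 := by
    linear_combination (-1/4)*hc11 - (1/4)*hc22 + (1/4)*hr00 - (1/2)*hcof00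
  -- diagonal entries at most 1
  have hle00 : Re 0 0 ≤ 1 := by
    have t := sq_nonneg (Re 0 0 - 1)
    have t1 := sq_nonneg (Re 1 0); have t2 := sq_nonneg (Re 2 0)
    linarith only [t, t1, t2, hc00]
  have hle11 : Re 1 1 ≤ 1 := by
    have t := sq_nonneg (Re 1 1 - 1)
    have t1 := sq_nonneg (Re 0 1); have t2 := sq_nonneg (Re 2 1)
    linarith only [t, t1, t2, hc11]
  have hle22 : Re 2 2 ≤ 1 := by
    have t := sq_nonneg (Re 2 2 - 1)
    have t1 := sq_nonneg (Re 0 2); have t2 := sq_nonneg (Re 1 2)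
    linarith only [t, t1, t2, hc22]
  -- nonnegativity of u's
  have hu0 : 0 ≤ ((Re 0 0 - Re 1 1 - Re 2 2 + 1)/2) := by
    by_contra hcon
    push_neg at hcon
    have hq : ((Re 0 0 - Re 1 1 - Re 2 2 + 1)/2) * (1 - Re 1 1) ≤ 0 :=
      mul_nonpos_iff.mpr (Or.inr ⟨hcon.le, by linarith only [hle11]⟩)
    have hp := mul_pos_of_neg_of_neg hcon hcon
    have hs := sq_nonneg ((Re 0 2 + Re 2 0)/2)
    linarith only [hq, hp, hs, hI10]
  have hu1 : 0 ≤ ((Re 1 1 - Re 0 0 - Re 2 2 + 1)/2) := by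
    by_contra hcon
    push_neg at hcon
    have hq : ((Re 1 1 - Re 0 0 - Re 2 2 + 1)/2) * (1 - Re 2 2) ≤ 0 :=
      mul_nonpos_iff.mpr (Or.inr ⟨hcon.le, by linarith only [hle22]⟩)
    have hp := mul_pos_of_neg_of_neg hcon hcon
    have hs := sq_nonneg ((Re 1 0 + Re 0 1)/2)
    linarith only [hq, hp, hs, hI11]
  have hu2 : 0 ≤ ((Re 2 2 - Re 0 0 - Re 1 1 + 1)/2) := by
    by_contra hcon
    push_neg at hcon
    have hq : ((Re 2 2 - Re 0 0 - Re 1 1 + 1)/2) * (1 - Re 0 0) ≤ 0 :=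
      mul_nonpos_iff.mpr (Or.inr ⟨hcon.le, by linarith only [hle00]⟩)
    have hp := mul_pos_of_neg_of_neg hcon hcon
    have hs := sq_nonneg ((Re 2 1 + Re 1 2)/2)
    linarith only [hq, hp, hs, hI12]
  -- lower bound on cc
  have h15 : (1+((Re 0 0 + Re 1 1 + Re 2 2 - 1)/2))*(1-((Re 0 0 + Re 1 1 + Re 2 2 - 1)/2)) = ((Re 2 1 - Re 1 2)/2)^2 + ((Re 0 2 - Re 2 0)/2)^2 + ((Re 1 0 - Re 0 1)/2)^2 := by
    linear_combination -hA0 - hA1 - hA2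
  have hclb : -1 ≤ ((Re 0 0 + Re 1 1 + Re 2 2 - 1)/2) := by
    by_contra hcon
    push_neg at hcon
    have hpos : (0:ℝ) < 1 - ((Re 0 0 + Re 1 1 + Re 2 2 - 1)/2) := by linarith only [hcon]
    have hneg : 1 + ((Re 0 0 + Re 1 1 + Re 2 2 - 1)/2) < 0 := by linarith only [hcon]
    have hq := mul_neg_of_neg_of_pos hneg hpos
    have t0 := sq_nonneg ((Re 2 1 - Re 1 2)/2); have t1 := sq_nonneg ((Re 0 2 - Re 2 0)/2); have t2 := sq_nonneg ((Re 1 0 - Re 0 1)/2)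
    linarith only [hq, t0, t1, t2, h15]
  have hsum : ((Re 0 0 - Re 1 1 - Re 2 2 + 1)/2) + ((Re 1 1 - Re 0 0 - Re 2 2 + 1)/2) + ((Re 2 2 - Re 0 0 - Re 1 1 + 1)/2) = 1 - ((Re 0 0 + Re 1 1 + Re 2 2 - 1)/2) := by ring
  -- Psi formula
  have hPsi : Psi (Matrix.diagonal ![k₁, k₂, k₃]) Re
      = ((k₂+k₃)*((Re 0 0 - Re 1 1 - Re 2 2 + 1)/2) + (k₃+k₁)*((Re 1 1 - Re 0 0 - Re 2 2 + 1)/2) + (k₁+k₂)*((Re 2 2 - Re 0 0 - Re 1 1 + 1)/2))/2 := by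
    have h0 : Psi (Matrix.diagonal ![k₁, k₂, k₃]) Re
        = (1/2) * (k₁*(1 - Re 0 0) + k₂*(1 - Re 1 1) + k₃*(1 - Re 2 2)) := by
      simp [Psi, Matrix.trace, Fin.sum_univ_three, Matrix.mul_apply, Matrix.diagonal,
        Matrix.one_apply, Matrix.sub_apply]
      try ring
    rw [h0]; ring
  -- norm formula
  have hNorm : 4 * norm3 (vee (skew (Matrix.diagonal ![k₁, k₂, k₃] * Re))) ^ 2
      = (k₃-k₂)^2*(((Re 1 1 - Re 0 0 - Re 2 2 + 1)/2)*((Re 2 2 - Re 0 0 - Re 1 1 + 1)/2)) + (k₁-k₃)^2*(((Re 0 0 - Re 1 1 - Re 2 2 + 1)/2)*((Re 2 2 - Re 0 0 - Re 1 1 + 1)/2)) + (k₂-k₁)^2*(((Re 0 0 - Re 1 1 - Re 2 2 + 1)/2)*((Re 1 1 - Re 0 0 - Re 2 2 + 1)/2))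
        + (1+((Re 0 0 + Re 1 1 + Re 2 2 - 1)/2))*((k₂+k₃)^2*((Re 0 0 - Re 1 1 - Re 2 2 + 1)/2) + (k₃+k₁)^2*((Re 1 1 - Re 0 0 - Re 2 2 + 1)/2) + (k₁+k₂)^2*((Re 2 2 - Re 0 0 - Re 1 1 + 1)/2)) := by
    have hn : norm3 (vee (skew (Matrix.diagonal ![k₁, k₂, k₃] * Re))) ^ 2
        = ((k₃*Re 2 1 - k₂*Re 1 2)/2)^2 + ((k₁*Re 0 2 - k₃*Re 2 0)/2)^2 + ((k₂*Re 1 0 - k₁*Re 0 1)/2)^2 := by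
      rw [norm3, Real.sq_sqrt (by positivity)]
      simp [vee, skew, Fin.sum_univ_three, Matrix.mul_apply, Matrix.diagonal,
        Matrix.sub_apply, Matrix.smul_apply, Matrix.transpose_apply]
      ring
    rw [hn]
    linear_combination (k₃-k₂)^2*hI312 + (k₁-k₃)^2*hI302 + (k₂-k₁)^2*hI301
      + (k₂+k₃)^2*hA0 + (k₃+k₁)^2*hA1 + (k₁+k₂)^2*hA2
      + 2*(k₁-k₃)*(k₃+k₁)*hF1 + 2*(k₂-k₁)*(k₁+k₂)*hF2
  -- constants
  have hC1pos : 0 < min (min (k₁ + k₂) (k₂ + k₃)) (k₃ + k₁) :=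
    lt_min (lt_min (by linarith) (by linarith)) (by linarith)
  have hC2nn : 0 ≤ max (max ((k₁ - k₂) ^ 2) ((k₂ - k₃) ^ 2)) ((k₃ - k₁) ^ 2) :=
    le_trans (sq_nonneg (k₁ - k₂)) (le_trans (le_max_left _ _) (le_max_left _ _))
  have hC13 : min (min (k₁ + k₂) (k₂ + k₃)) (k₃ + k₁)
      ≤ max (max (k₁ + k₂) (k₂ + k₃)) (k₃ + k₁) :=
    le_trans (min_le_right _ _) (le_max_right _ _)
  have hm0 : min (min (k₁ + k₂) (k₂ + k₃)) (k₃ + k₁) ≤ k₂ + k₃ :=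
    le_trans (min_le_left _ _) (min_le_right _ _)
  have hm1 : min (min (k₁ + k₂) (k₂ + k₃)) (k₃ + k₁) ≤ k₃ + k₁ := min_le_right _ _
  have hm2 : min (min (k₁ + k₂) (k₂ + k₃)) (k₃ + k₁) ≤ k₁ + k₂ :=
    le_trans (min_le_left _ _) (min_le_left _ _)
  have hm0' : k₂ + k₃ ≤ max (max (k₁ + k₂) (k₂ + k₃)) (k₃ + k₁) :=
    le_trans (le_max_right _ _) (le_max_left _ _)
  have hm1' : k₃ + k₁ ≤ max (max (k₁ + k₂) (k₂ + k₃)) (k₃ + k₁) := le_max_right _ _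
  have hm2' : k₁ + k₂ ≤ max (max (k₁ + k₂) (k₂ + k₃)) (k₃ + k₁) :=
    le_trans (le_max_left _ _) (le_max_left _ _)
  have hD0' : (k₃-k₂)^2 ≤ max (max ((k₁ - k₂) ^ 2) ((k₂ - k₃) ^ 2)) ((k₃ - k₁) ^ 2) := by
    rw [show (k₃-k₂)^2 = (k₂-k₃)^2 by ring]
    exact le_trans (le_max_right _ _) (le_max_left _ _)
  have hD1' : (k₁-k₃)^2 ≤ max (max ((k₁ - k₂) ^ 2) ((k₂ - k₃) ^ 2)) ((k₃ - k₁) ^ 2) := by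
    rw [show (k₁-k₃)^2 = (k₃-k₁)^2 by ring]
    exact le_max_right _ _
  have hD2' : (k₂-k₁)^2 ≤ max (max ((k₁ - k₂) ^ 2) ((k₂ - k₃) ^ 2)) ((k₃ - k₁) ^ 2) := by
    rw [show (k₂-k₁)^2 = (k₁-k₂)^2 by ring]
    exact le_trans (le_max_left _ _) (le_max_left _ _)
  exact aux_main ((k₃-k₂)^2) ((k₁-k₃)^2) ((k₂-k₁)^2)
    (min (min (k₁ + k₂) (k₂ + k₃)) (k₃ + k₁))
    (max (max ((k₁ - k₂) ^ 2) ((k₂ - k₃) ^ 2)) ((k₃ - k₁) ^ 2))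
    (max (max (k₁ + k₂) (k₂ + k₃)) (k₃ + k₁))
    (k₂+k₃) (k₃+k₁) (k₁+k₂)
    (Psi (Matrix.diagonal ![k₁, k₂, k₃]) Re) ψ
    (norm3 (vee (skew (Matrix.diagonal ![k₁, k₂, k₃] * Re))) ^ 2)
    ((Re 0 0 - Re 1 1 - Re 2 2 + 1)/2) ((Re 1 1 - Re 0 0 - Re 2 2 + 1)/2) ((Re 2 2 - Re 0 0 - Re 1 1 + 1)/2) ((Re 0 0 + Re 1 1 + Re 2 2 - 1)/2)
    hC1pos hC2nn hC13 hm0 hm1 hm2 hm0' hm1' hm2'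
    (sq_nonneg _) (sq_nonneg _) (sq_nonneg _) hD0' hD1' hD2'
    hu0 hu1 hu2 hsum hclb hPsi hNorm hΨ hψ
end
end

section
/- With the attitude error R_e = R·R_dᵀ, gain K_R = diag(k₁,k₂,k₃), error vector e_R = skew(K_R·R_e)^∨, and velocity error e_ω = ω − ω_d, the time derivative of e_R satisfies ė_R = E(K_R, R_e)·e_ω where E(K_R, R_e) = (1/2)·(tr(K_R·R_e)·I − R_eᵀ·K_R)·R_d. -/
open Matrix

noncomputable section

/-
Proof idea: by the product rule, `d/dt (R Rdᵀ) = R hat(ω) Rdᵀ - R hat(ωd) Rdᵀ = Re (Rd hat(eω) Rdᵀ)`,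
and conjugating a hat matrix by a rotation rotates its vector, so this is `Re hat(Rd eω)`.
Hence `ė_R = vee (skew (K Re hat(Rd eω)))`, and `vee (skew (B hat x)) = ½ (tr B • 1 - Bᵀ) x`
with `B = K Re`, `Bᵀ = Reᵀ K`, gives the claim.
-/

-- Matrices carry no canonical norm, so derivatives of matrix curves are taken entrywise.
def HasEntrywiseDerivAt {m n : Type*} (A : ℝ → Matrix m n ℝ) (A' : Matrix m n ℝ) (t : ℝ) :
    Prop :=
  ∀ i j, HasDerivAt (fun s => A s i j) (A' i j) t

namespace HasEntrywiseDerivAt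

variable {l m n : Type*} {t : ℝ}

theorem mul [Fintype m] {A : ℝ → Matrix l m ℝ} {B : ℝ → Matrix m n ℝ} {A' : Matrix l m ℝ}
    {B' : Matrix m n ℝ} (hA : HasEntrywiseDerivAt A A' t) (hB : HasEntrywiseDerivAt B B' t) :
    HasEntrywiseDerivAt (fun s => A s * B s) (A' * B t + A t * B') t := by
  intro i j
  simp only [mul_apply, Matrix.add_apply, ← Finset.sum_add_distrib]
  exact HasDerivAt.fun_sum fun k _ => (hA i k).mul (hB k j)

theorem const_mul [Fintype m] (K : Matrix l m ℝ) {A : ℝ → Matrix m n ℝ} {A' : Matrix m n ℝ}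
    (hA : HasEntrywiseDerivAt A A' t) : HasEntrywiseDerivAt (fun s => K * A s) (K * A') t := by
  intro i j
  simp only [mul_apply]
  exact HasDerivAt.fun_sum fun k _ => (hA k j).const_mul (K i k)

theorem transpose {A : ℝ → Matrix m n ℝ} {A' : Matrix m n ℝ} (hA : HasEntrywiseDerivAt A A' t) :
    HasEntrywiseDerivAt (fun s => (A s)ᵀ) A'ᵀ t :=
  fun i j => hA j i

theorem vee_skew {A : ℝ → Matrix (Fin 3) (Fin 3) ℝ} {A' : Matrix (Fin 3) (Fin 3) ℝ}
    (hA : HasEntrywiseDerivAt A A' t) (i : Fin 3) :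
    HasDerivAt (fun s => vee (skew (A s)) i) (vee (skew A') i) t := by
  have h : ∀ j k, HasDerivAt (fun s => skew (A s) j k) (skew A' j k) t := fun j k =>
    ((hA j k).sub (hA k j)).const_mul (1 / 2 : ℝ)
  fin_cases i
  exacts [h 2 1, h 0 2, h 1 0]

end HasEntrywiseDerivAt

theorem hat_transpose (x : Fin 3 → ℝ) : (hat x)ᵀ = -hat x := by
  ext i j; fin_cases i <;> fin_cases j <;> simp [hat]

theorem hat_sub (x y : Fin 3 → ℝ) : hat (x - y) = hat x - hat y := by
  ext i j; fin_cases i <;> fin_cases j <;> simp [hat] <;> ring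

-- The cofactor identity `(Q a) × (Q b) = cof Q (a × b)` written with `hat`.
theorem mul_hat_mul_transpose (Q : Matrix (Fin 3) (Fin 3) ℝ) (x : Fin 3 → ℝ) :
    Q * hat x * Qᵀ = hat ((adjugate Q)ᵀ *ᵥ x) := by
  ext i j
  fin_cases i <;> fin_cases j <;>
    simp [hat, adjugate_fin_three, mul_apply, mulVec, dotProduct, Fin.sum_univ_three] <;> ring

theorem adjugate_eq_transpose_of_mem_SO3 {Q : Matrix (Fin 3) (Fin 3) ℝ} (hQ : Q ∈ SO3) :
    adjugate Q = Qᵀ := by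
  obtain ⟨horth, hdet⟩ := hQ
  calc adjugate Q = adjugate Q * Q * Qᵀ := by rw [mul_assoc, mul_eq_one_comm.mp horth, mul_one]
    _ = Qᵀ := by rw [adjugate_mul, hdet, one_smul, one_mul]

theorem mul_hat_mul_transpose_of_mem_SO3 {Q : Matrix (Fin 3) (Fin 3) ℝ} (hQ : Q ∈ SO3)
    (x : Fin 3 → ℝ) : Q * hat x * Qᵀ = hat (Q *ᵥ x) := by
  rw [mul_hat_mul_transpose, adjugate_eq_transpose_of_mem_SO3 hQ, transpose_transpose]

theorem vee_skew_mul_hat (B : Matrix (Fin 3) (Fin 3) ℝ) (x : Fin 3 → ℝ) :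
    vee (skew (B * hat x)) =
      ((1 / 2 : ℝ) • (B.trace • (1 : Matrix (Fin 3) (Fin 3) ℝ) - Bᵀ)) *ᵥ x := by
  ext i
  fin_cases i <;>
    simp [vee, skew, hat, mulVec, dotProduct, Fin.sum_univ_three, mul_apply, trace, one_apply] <;>
    ring

theorem vee_skew_mul_hat_mul_transpose {Q : Matrix (Fin 3) (Fin 3) ℝ} (hQ : Q ∈ SO3)
    (A : Matrix (Fin 3) (Fin 3) ℝ) (x : Fin 3 → ℝ) :
    vee (skew (A * (Q * hat x * Qᵀ))) =
      ((1 / 2 : ℝ) • (A.trace • (1 : Matrix (Fin 3) (Fin 3) ℝ) - Aᵀ) * Q) *ᵥ x := by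
  rw [mul_hat_mul_transpose_of_mem_SO3 hQ, vee_skew_mul_hat, mulVec_mulVec]

theorem stmt_5_general (k₁ k₂ k₃ : ℝ)
    (R Rd : ℝ → Matrix (Fin 3) (Fin 3) ℝ) (ω ωd : ℝ → Fin 3 → ℝ) (t : ℝ)
    (hRd : ∀ s, Rd s ∈ SO3)
    (hdR : ∀ s (i j : Fin 3), HasDerivAt (fun u => R u i j) ((R s * hat (ω s)) i j) s)
    (hdRd : ∀ s (i j : Fin 3), HasDerivAt (fun u => Rd u i j) ((Rd s * hat (ωd s)) i j) s) :
    ∀ i : Fin 3,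
      HasDerivAt
        (fun s => vee (skew (Matrix.diagonal ![k₁, k₂, k₃] * (R s * (Rd s)ᵀ))) i)
        ((((1/2 : ℝ) •
            ((Matrix.diagonal ![k₁, k₂, k₃] * (R t * (Rd t)ᵀ)).trace •
                (1 : Matrix (Fin 3) (Fin 3) ℝ) -
              (R t * (Rd t)ᵀ)ᵀ * Matrix.diagonal ![k₁, k₂, k₃]) * Rd t).mulVec
          (ω t - ωd t)) i) t := by
  intro i
  set K := Matrix.diagonal ![k₁, k₂, k₃]
  have hR' : HasEntrywiseDerivAt R (R t * hat (ω t)) t := hdR t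
  have hRd' : HasEntrywiseDerivAt Rd (Rd t * hat (ωd t)) t := hdRd t
  have hRe : HasEntrywiseDerivAt (fun s => R s * (Rd s)ᵀ)
      (R t * (Rd t)ᵀ * (Rd t * hat (ω t - ωd t) * (Rd t)ᵀ)) t := by
    convert hR'.mul hRd'.transpose using 1
    simp only [← mul_assoc]
    rw [mul_assoc (R t), (hRd t).1, mul_one, hat_sub, transpose_mul, hat_transpose]
    noncomm_ring
  have hKRe_transpose : (K * (R t * (Rd t)ᵀ))ᵀ = (R t * (Rd t)ᵀ)ᵀ * K := by
    rw [transpose_mul, diagonal_transpose]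
  convert (hRe.const_mul K).vee_skew i using 1
  rw [← mul_assoc K (R t * (Rd t)ᵀ), vee_skew_mul_hat_mul_transpose (hRd t), hKRe_transpose]

/-- ė_R = E(K_R, R_e)·e_ω with E(K_R,R_e) = ½(tr(K_R R_e)I − R_eᵀK_R)R_d. -/
theorem stmt_5 (k₁ k₂ k₃ : ℝ) (hk₁ : 0 < k₁) (hk₂ : 0 < k₂) (hk₃ : 0 < k₃)
    (R Rd : ℝ → Matrix (Fin 3) (Fin 3) ℝ) (ω ωd : ℝ → Fin 3 → ℝ) (t : ℝ)
    (hR : ∀ s, R s ∈ SO3) (hRd : ∀ s, Rd s ∈ SO3)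
    (hdR : ∀ s (i j : Fin 3), HasDerivAt (fun u => R u i j) ((R s * hat (ω s)) i j) s)
    (hdRd : ∀ s (i j : Fin 3), HasDerivAt (fun u => Rd u i j) ((Rd s * hat (ωd s)) i j) s) :
    ∀ i : Fin 3,
      HasDerivAt
        (fun s => vee (skew (Matrix.diagonal ![k₁, k₂, k₃] * (R s * (Rd s)ᵀ))) i)
        ((((1/2 : ℝ) •
            ((Matrix.diagonal ![k₁, k₂, k₃] * (R t * (Rd t)ᵀ)).trace •
                (1 : Matrix (Fin 3) (Fin 3) ℝ) -
              (R t * (Rd t)ᵀ)ᵀ * Matrix.diagonal ![k₁, k₂, k₃]) * Rd t).mulVec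
          (ω t - ωd t)) i) t :=
  stmt_5_general k₁ k₂ k₃ R Rd ω ωd t hRd hdR hdRd
end
end

section
/- With ė_R = (1/2)·(tr(K_R·R_e)·I − R_eᵀ·K_R)·R_d·e_ω where R_e, R_d ∈ SO(3) and K_R = diag(k₁,k₂,k₃) with positive entries, the bound ‖ė_R‖ ≤ (1/√2)·tr(K_R)·‖e_ω‖ holds. -/
open Matrix

set_option maxHeartbeats 2000000

noncomputable section

/-- Core scalar inequality: `‖(tr(K Rₑ)I − RₑᵀK) z‖² ≤ 2 (tr K)² ‖z‖²` in coordinates,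
assuming the rows of `Rₑ` are unit vectors. -/

lemma core_ineq (k₁ k₂ k₃ a00 a01 a02 a10 a11 a12 a20 a21 a22 z0 z1 z2 : ℝ)
    (hk₁ : 0 < k₁) (hk₂ : 0 < k₂) (hk₃ : 0 < k₃)
    (h0 : a00^2 + a01^2 + a02^2 = 1)
    (h1 : a10^2 + a11^2 + a12^2 = 1)
    (h2 : a20^2 + a21^2 + a22^2 = 1) :
    ((k₁*a00 + k₂*a11 + k₃*a22)*z0 - (k₁*a00*z0 + k₂*a10*z1 + k₃*a20*z2))^2
  + ((k₁*a00 + k₂*a11 + k₃*a22)*z1 - (k₁*a01*z0 + k₂*a11*z1 + k₃*a21*z2))^2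
  + ((k₁*a00 + k₂*a11 + k₃*a22)*z2 - (k₁*a02*z0 + k₂*a12*z1 + k₃*a22*z2))^2
    ≤ 2*(k₁+k₂+k₃)^2*(z0^2+z1^2+z2^2) := by
  have key :
      ((k₁*a00 + k₂*a11 + k₃*a22)*z0 - (k₁*a00*z0 + k₂*a10*z1 + k₃*a20*z2))^2
    + ((k₁*a00 + k₂*a11 + k₃*a22)*z1 - (k₁*a01*z0 + k₂*a11*z1 + k₃*a21*z2))^2
    + ((k₁*a00 + k₂*a11 + k₃*a22)*z2 - (k₁*a02*z0 + k₂*a12*z1 + k₃*a22*z2))^2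
    = 2*(k₁+k₂+k₃)^2*(z0^2+z1^2+z2^2)
      - (4*(k₁*k₂+k₁*k₃+k₂*k₃)*(z0^2+z1^2+z2^2)
        + 2*((k₁*(a00*z0+a01*z1+a02*z2))^2 + (k₂*(a10*z0+a11*z1+a12*z2))^2
            + (k₃*(a20*z0+a21*z1+a22*z2))^2)
        + (1/2)*((2*(k₁*(a01*z2-a02*z1)))^2 + (2*(k₂*(a12*z0-a10*z2)))^2
            + (2*(k₃*(a20*z1-a21*z0)))^2
          + 2*(k₁*(a02*z0-a00*z2) + k₂*(a11*z2-a12*z1))^2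
          + 2*(k₁*(a00*z1-a01*z0) + k₃*(a21*z2-a22*z1))^2
          + 2*(k₂*(a10*z1-a11*z0) + k₃*(a22*z0-a20*z2))^2)) := by
    linear_combination (2*k₁^2*(z0^2+z1^2+z2^2))*h0 + (2*k₂^2*(z0^2+z1^2+z2^2))*h1
      + (2*k₃^2*(z0^2+z1^2+z2^2))*h2
  rw [key]
  have hz : (0:ℝ) ≤ z0^2+z1^2+z2^2 := by positivity
  have hs : (0:ℝ) ≤ k₁*k₂+k₁*k₃+k₂*k₃ :=
    add_nonneg (add_nonneg (mul_pos hk₁ hk₂).le (mul_pos hk₁ hk₃).le) (mul_pos hk₂ hk₃).le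
  have hA : (0:ℝ) ≤ 4*(k₁*k₂+k₁*k₃+k₂*k₃)*(z0^2+z1^2+z2^2) :=
    mul_nonneg (mul_nonneg (by norm_num) hs) hz
  have hB : (0:ℝ) ≤ 2*((k₁*(a00*z0+a01*z1+a02*z2))^2 + (k₂*(a10*z0+a11*z1+a12*z2))^2
            + (k₃*(a20*z0+a21*z1+a22*z2))^2) := by positivity
  have hC : (0:ℝ) ≤ (1/2)*((2*(k₁*(a01*z2-a02*z1)))^2 + (2*(k₂*(a12*z0-a10*z2)))^2
            + (2*(k₃*(a20*z1-a21*z0)))^2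
          + 2*(k₁*(a02*z0-a00*z2) + k₂*(a11*z2-a12*z1))^2
          + 2*(k₁*(a00*z1-a01*z0) + k₃*(a21*z2-a22*z1))^2
          + 2*(k₂*(a10*z1-a11*z0) + k₃*(a22*z0-a20*z2))^2) := by positivity
  linarith

/-- ‖E(K_R,R_e)·e_ω‖ ≤ (1/√2)·tr(K_R)·‖e_ω‖. -/
theorem stmt_6 (k₁ k₂ k₃ : ℝ) (hk₁ : 0 < k₁) (hk₂ : 0 < k₂) (hk₃ : 0 < k₃)
    (Re Rd : Matrix (Fin 3) (Fin 3) ℝ) (hRe : Re ∈ SO3) (hRd : Rd ∈ SO3)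
    (eω : Fin 3 → ℝ) :
    norm3 ((((1/2 : ℝ) •
        ((Matrix.diagonal ![k₁, k₂, k₃] * Re).trace • (1 : Matrix (Fin 3) (Fin 3) ℝ) -
          Reᵀ * Matrix.diagonal ![k₁, k₂, k₃]) * Rd).mulVec eω)) ≤
      (1 / Real.sqrt 2) * (Matrix.diagonal ![k₁, k₂, k₃]).trace * norm3 eω := by
  obtain ⟨hRe1, -⟩ := hRe
  obtain ⟨hRd1, -⟩ := hRd
  have hRe2 : Re * Reᵀ = 1 := mul_eq_one_comm.mp hRe1
  have hrow : ∀ i, Re i 0 ^ 2 + Re i 1 ^ 2 + Re i 2 ^ 2 = 1 := by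
    intro i
    have h := congrFun (congrFun hRe2 i) i
    simp [Matrix.mul_apply, Matrix.transpose_apply, Fin.sum_univ_three,
      Matrix.one_apply, sq] at h ⊢
    linarith [h]
  set z : Fin 3 → ℝ := Rd.mulVec eω with hzdef
  have hznorm : z 0 ^ 2 + z 1 ^ 2 + z 2 ^ 2 = eω 0 ^ 2 + eω 1 ^ 2 + eω 2 ^ 2 := by
    have e00 := congrFun (congrFun hRd1 0) 0
    have e11 := congrFun (congrFun hRd1 1) 1
    have e22 := congrFun (congrFun hRd1 2) 2
    have e01 := congrFun (congrFun hRd1 0) 1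
    have e02 := congrFun (congrFun hRd1 0) 2
    have e12 := congrFun (congrFun hRd1 1) 2
    simp [Matrix.mul_apply, Matrix.transpose_apply, Fin.sum_univ_three,
      Matrix.one_apply] at e00 e11 e22 e01 e02 e12
    simp only [hzdef, Matrix.mulVec, dotProduct, Fin.sum_univ_three]
    linear_combination (eω 0^2)*e00 + (eω 1^2)*e11 + (eω 2^2)*e22
      + (2*eω 0*eω 1)*e01 + (2*eω 0*eω 2)*e02 + (2*eω 1*eω 2)*e12
  have hT : (0:ℝ) < k₁ + k₂ + k₃ := by linarith
  have htr : (Matrix.diagonal ![k₁, k₂, k₃]).trace = k₁ + k₂ + k₃ := by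
    simp [Matrix.trace, Matrix.diag, Matrix.diagonal, Fin.sum_univ_three]
  have hrw : (((1/2 : ℝ) •
        ((Matrix.diagonal ![k₁, k₂, k₃] * Re).trace • (1 : Matrix (Fin 3) (Fin 3) ℝ) -
          Reᵀ * Matrix.diagonal ![k₁, k₂, k₃]) * Rd).mulVec eω)
      = (1/2 : ℝ) • (((Matrix.diagonal ![k₁, k₂, k₃] * Re).trace •
            (1 : Matrix (Fin 3) (Fin 3) ℝ) -
          Reᵀ * Matrix.diagonal ![k₁, k₂, k₃]).mulVec z) := by
    rw [← Matrix.mulVec_mulVec, Matrix.smul_mulVec]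
  have hcomp : ∀ j : Fin 3,
      (((Matrix.diagonal ![k₁, k₂, k₃] * Re).trace • (1 : Matrix (Fin 3) (Fin 3) ℝ) -
          Reᵀ * Matrix.diagonal ![k₁, k₂, k₃]).mulVec z) j
      = (k₁*Re 0 0 + k₂*Re 1 1 + k₃*Re 2 2)*z j
        - (k₁*Re 0 j*z 0 + k₂*Re 1 j*z 1 + k₃*Re 2 j*z 2) := by
    intro j
    fin_cases j <;>
    · simp [Matrix.mulVec, dotProduct, Matrix.sub_apply, Matrix.smul_apply,
        Matrix.one_apply, Matrix.mul_apply, Matrix.transpose_apply, Matrix.diagonal,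
        Matrix.trace, Matrix.diag, Fin.sum_univ_three]
      ring
  have core := core_ineq k₁ k₂ k₃ (Re 0 0) (Re 0 1) (Re 0 2) (Re 1 0) (Re 1 1) (Re 1 2)
    (Re 2 0) (Re 2 1) (Re 2 2) (z 0) (z 1) (z 2) hk₁ hk₂ hk₃ (hrow 0) (hrow 1) (hrow 2)
  rw [norm3, norm3, hrw, htr, Fin.sum_univ_three, Fin.sum_univ_three]
  have hS2 : (0:ℝ) ≤ eω 0 ^ 2 + eω 1 ^ 2 + eω 2 ^ 2 := by positivity
  have hkey : ((1/2 : ℝ) • (((Matrix.diagonal ![k₁, k₂, k₃] * Re).trace •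
            (1 : Matrix (Fin 3) (Fin 3) ℝ) -
          Reᵀ * Matrix.diagonal ![k₁, k₂, k₃]).mulVec z)) 0 ^ 2
      + ((1/2 : ℝ) • (((Matrix.diagonal ![k₁, k₂, k₃] * Re).trace •
            (1 : Matrix (Fin 3) (Fin 3) ℝ) -
          Reᵀ * Matrix.diagonal ![k₁, k₂, k₃]).mulVec z)) 1 ^ 2
      + ((1/2 : ℝ) • (((Matrix.diagonal ![k₁, k₂, k₃] * Re).trace •
            (1 : Matrix (Fin 3) (Fin 3) ℝ) -
          Reᵀ * Matrix.diagonal ![k₁, k₂, k₃]).mulVec z)) 2 ^ 2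
      ≤ (1/2) * (k₁ + k₂ + k₃)^2 * (eω 0 ^ 2 + eω 1 ^ 2 + eω 2 ^ 2) := by
    simp only [Pi.smul_apply, smul_eq_mul, hcomp 0, hcomp 1, hcomp 2]
    rw [← hznorm]
    nlinarith [core]
  calc Real.sqrt _ ≤ Real.sqrt ((1/2) * (k₁ + k₂ + k₃)^2 *
        (eω 0 ^ 2 + eω 1 ^ 2 + eω 2 ^ 2)) := Real.sqrt_le_sqrt hkey
    _ = 1 / Real.sqrt 2 * (k₁ + k₂ + k₃) * Real.sqrt (eω 0 ^ 2 + eω 1 ^ 2 + eω 2 ^ 2) := by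
        rw [Real.sqrt_mul (by positivity), Real.sqrt_mul (by norm_num),
          Real.sqrt_sq hT.le, show (1/2:ℝ) = (2:ℝ)⁻¹ by norm_num, Real.sqrt_inv]
        ring
end
end

section
/- Let R_e ∈ SO(3), K_R positive definite diagonal with minimal eigenvalue λ_m, Ψ = (1/2)tr(K_R(I − R_e)), Ψ_M > 0 with Ψ ≤ Ψ_M, and c = (Ψ_M − Ψ)/Ψ_M. Then, with γ' = 2Ψ_M/λ_m, ‖cR_e − I‖_F² ≤ (3 − 2γ')(Ψ/Ψ_M)² + 2γ'(Ψ/Ψ_M), and consequently ‖cR_e − I‖_F² ≤ (3 + 2γ')(Ψ/Ψ_M). -/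
open Matrix

noncomputable section

/-- Frobenius norm ‖A‖_F = √tr(AᵀA). -/
def frob (A : Matrix (Fin 3) (Fin 3) ℝ) : ℝ := Real.sqrt ((Aᵀ * A).trace)

/-- With c = (Ψ_M − Ψ)/Ψ_M and γ' = 2Ψ_M/λ_m:
‖cR_e − I‖_F² ≤ (3 − 2γ')(Ψ/Ψ_M)² + 2γ'(Ψ/Ψ_M) and ‖cR_e − I‖_F² ≤ (3 + 2γ')(Ψ/Ψ_M). -/
theorem stmt_9 (k₁ k₂ k₃ : ℝ) (hk₁ : 0 < k₁) (hk₂ : 0 < k₂) (hk₃ : 0 < k₃)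
    (Re : Matrix (Fin 3) (Fin 3) ℝ) (hRe : Re ∈ SO3) (ΨM : ℝ) (hΨM : 0 < ΨM)
    (hΨ : Psi (Matrix.diagonal ![k₁, k₂, k₃]) Re ≤ ΨM) :
    frob (((ΨM - Psi (Matrix.diagonal ![k₁, k₂, k₃]) Re) / ΨM) • Re - 1) ^ 2 ≤
        (3 - 2 * (2 * ΨM / min (min k₁ k₂) k₃)) *
            (Psi (Matrix.diagonal ![k₁, k₂, k₃]) Re / ΨM) ^ 2 +
          2 * (2 * ΨM / min (min k₁ k₂) k₃) *
            (Psi (Matrix.diagonal ![k₁, k₂, k₃]) Re / ΨM) ∧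
      frob (((ΨM - Psi (Matrix.diagonal ![k₁, k₂, k₃]) Re) / ΨM) • Re - 1) ^ 2 ≤
        (3 + 2 * (2 * ΨM / min (min k₁ k₂) k₃)) *
          (Psi (Matrix.diagonal ![k₁, k₂, k₃]) Re / ΨM) := by

  obtain ⟨hO, hdet⟩ := hRe
  set K := Matrix.diagonal ![k₁, k₂, k₃] with hK
  set P := Psi K Re with hPdef
  set lm := min (min k₁ k₂) k₃ with hlm
  set c := (ΨM - P) / ΨM with hc
  have hlpos : 0 < lm := lt_min (lt_min hk₁ hk₂) hk₃
  have hl1 : lm ≤ k₁ := le_trans (min_le_left _ _) (min_le_left _ _)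
  have hl2 : lm ≤ k₂ := le_trans (min_le_left _ _) (min_le_right _ _)
  have hl3 : lm ≤ k₃ := min_le_right _ _
  have hcol : ∀ i, Re 0 i ^ 2 + Re 1 i ^ 2 + Re 2 i ^ 2 = 1 := by
    intro i
    have h := congrFun (congrFun hO i) i
    simpa [Matrix.mul_apply, Fin.sum_univ_three, Matrix.one_apply, sq,
      Matrix.transpose_apply] using h
  have h00 : Re 0 0 ≤ 1 := by
    nlinarith [hcol 0, sq_nonneg (Re 1 0), sq_nonneg (Re 2 0), sq_nonneg (Re 0 0 + 1)]
  have h11 : Re 1 1 ≤ 1 := by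
    nlinarith [hcol 1, sq_nonneg (Re 0 1), sq_nonneg (Re 2 1), sq_nonneg (Re 1 1 + 1)]
  have h22 : Re 2 2 ≤ 1 := by
    nlinarith [hcol 2, sq_nonneg (Re 0 2), sq_nonneg (Re 1 2), sq_nonneg (Re 2 2 + 1)]
  have hPval : P = (k₁ * (1 - Re 0 0) + k₂ * (1 - Re 1 1) + k₃ * (1 - Re 2 2)) / 2 := by
    rw [hPdef, hK]
    simp only [Psi, Matrix.trace, Matrix.mul_apply, Fin.sum_univ_three, Matrix.diag_apply,
      Matrix.sub_apply, Matrix.one_apply, Matrix.diagonal]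
    norm_num [Matrix.of_apply, Fin.ext_iff]
    have e : ∀ x y z : ℝ, ![x, y, z] 2 = z := fun _ _ _ => rfl
    simp only [e]
    ring
  have hPnn : 0 ≤ P := by rw [hPval]; nlinarith
  have htReval : Re.trace = Re 0 0 + Re 1 1 + Re 2 2 := by
    simp [Matrix.trace, Fin.sum_univ_three, Matrix.diag]
  have htrb : lm * (3 - Re.trace) ≤ 2 * P := by
    rw [htReval, hPval]
    nlinarith [mul_nonneg (sub_nonneg.2 hl1) (sub_nonneg.2 h00),
      mul_nonneg (sub_nonneg.2 hl2) (sub_nonneg.2 h11),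
      mul_nonneg (sub_nonneg.2 hl3) (sub_nonneg.2 h22)]
  have hmat : ((c • Re - 1)ᵀ * (c • Re - 1)) =
      (c * c) • (Reᵀ * Re) - c • Reᵀ - c • Re + 1 := by
    rw [Matrix.transpose_sub, Matrix.transpose_smul, Matrix.transpose_one,
      Matrix.sub_mul, Matrix.mul_sub, Matrix.mul_sub,
      Matrix.smul_mul, Matrix.mul_smul, smul_smul, Matrix.one_mul, Matrix.mul_one,
      Matrix.one_mul]
    abel
  have hnn : 0 ≤ ((c • Re - 1)ᵀ * (c • Re - 1)).trace := by
    rw [Matrix.trace]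
    refine Finset.sum_nonneg fun i _ => ?_
    rw [Matrix.diag_apply, Matrix.mul_apply]
    exact Finset.sum_nonneg fun j _ => mul_self_nonneg _
  have htr : ((c • Re - 1)ᵀ * (c • Re - 1)).trace = 3 * c ^ 2 + 3 - 2 * c * Re.trace := by
    rw [hmat, hO]
    simp [Matrix.trace_sub, Matrix.trace_add, Matrix.trace_smul, Matrix.trace_transpose,
      Matrix.trace_one]
    ring
  have hf : frob (c • Re - 1) ^ 2 = 3 * c ^ 2 + 3 - 2 * c * Re.trace := by
    rw [frob, Real.sq_sqrt hnn, htr]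
  rw [hf]
  set t := Re.trace with ht
  have hΨM' : ΨM ≠ 0 := ne_of_gt hΨM
  have hl' : lm ≠ 0 := ne_of_gt hlpos
  set x := P / ΨM with hx
  set gm := 2 * ΨM / lm with hgm
  have hcx : c = 1 - x := by rw [hc, hx, sub_div, div_self hΨM']
  have hx0 : 0 ≤ x := div_nonneg hPnn hΨM.le
  have hx1 : x ≤ 1 := by rw [hx, div_le_one hΨM]; exact hΨ
  have hgm0 : 0 < gm := by rw [hgm]; positivity
  have hxg : x * gm = 2 * P / lm := by rw [hx, hgm]; field_simp
  have h3t : 3 - t ≤ x * gm := by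
    rw [hxg, le_div_iff₀ hlpos]; nlinarith [htrb]
  clear_value P lm c t x gm
  clear hmat hnn htr hf hcol hO hdet hPdef hK hPval htReval htrb hxg hc hx hgm hlm ht h00 h11 h22 hl1 hl2 hl3 Re K
  have key : 3 * c ^ 2 + 3 - 2 * c * t ≤ (3 - 2 * gm) * x ^ 2 + 2 * gm * x := by
    rw [hcx]
    nlinarith [mul_nonneg (sub_nonneg.2 hx1) (by linarith : (0:ℝ) ≤ t - (3 - x * gm))]
  refine ⟨key, le_trans key ?_⟩
  nlinarith [mul_nonneg hgm0.le (sq_nonneg x)]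
end
end
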